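/- arXiv:1809.10829 — 6 statements merged into one kernel-verified Lean document; each statement's English description precedes it below -/
import Mathlib

section
/- Reformulation, forward equation: Let Ω be a finite sample space with pmf p, let ζ_α : Ω → Z_α be a map into a finite type, let K be a finite index set of children, and for each k ∈ K let κ_k : Ω → X_k be a map into a finite type, f_k : X_k → ℝ a function, w_k ∈ ℝ a weight, and ζ_{β_k} : Ω → Z_{β_k} a map into a finite type. Let d : Ω → ℝ be a gating function and define f_j := d · (Σ_k w_k (f_k ∘ κ_k)). Assume: (i) decorrelation: for every a with P(ζ_α = a) > 0, E[d · Σ_k w_k (f_k ∘ κ_k) | ζ_α = a] = E[d | ζ_α = a] · E[Σ_k w_k (f_k ∘ κ_k) | ζ_α = a]; (ii) focus of knowledge for each k: for all a, b with P(ζ_α = a, ζ_{β_k} = b) > 0 and all x, P(κ_k = x | ζ_α = a, ζ_{β_k} = b) = P(κ_k = x | ζ_{β_k} = b). Then for every a with P(ζ_α = a) > 0: E[f_j | ζ_α = a] = E[d | ζ_α = a] · Σ_k w_k Σ_{b : P(ζ_α = a, ζ_{β_k} = b) > 0} P(ζ_{β_k} = b | ζ_α = a) · E[f_k ∘ κ_k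 | ζ_{β_k} = b]. -/
open Finset
open scoped Classical

/-- `Pr p ζ z` is the probability of the event `ζ = z` under the pmf `p`. -/
noncomputable def Pr {Ω : Type*} [Fintype Ω] {Z : Type*} (p : Ω → ℝ) (ζ : Ω → Z) (z : Z) : ℝ :=
  ∑ ω ∈ univ.filter fun ω => ζ ω = z, p ω

/-- `CE p ζ z h` is the conditional expectation `E[h | ζ = z]` under the pmf `p`. -/
noncomputable def CE {Ω : Type*} [Fintype Ω] {Z : Type*} (p : Ω → ℝ) (ζ : Ω → Z) (z : Z)
    (h : Ω → ℝ) : ℝ :=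
  (∑ ω ∈ univ.filter fun ω => ζ ω = z, h ω * p ω) / Pr p ζ z

/-- `CPr p ξ w ζ z` is the conditional probability `P(ξ = w | ζ = z)` under the pmf `p`. -/
noncomputable def CPr {Ω : Type*} [Fintype Ω] {Z W : Type*} (p : Ω → ℝ) (ξ : Ω → W) (w : W)
    (ζ : Ω → Z) (z : Z) : ℝ :=
  Pr p (fun ω => (ξ ω, ζ ω)) (w, z) / Pr p ζ z

lemma sum_comp_eq {Ω Z X : Type*} [Fintype Ω] [Fintype X] (p : Ω → ℝ) (ζ : Ω → Z) (z : Z)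
    (κ : Ω → X) (f : X → ℝ) :
    ∑ ω ∈ univ.filter fun ω => ζ ω = z, f (κ ω) * p ω
      = ∑ x, f x * Pr p (fun ω => (κ ω, ζ ω)) (x, z) := by
  rw [← Finset.sum_fiberwise (univ.filter fun ω => ζ ω = z) κ (fun ω => f (κ ω) * p ω)]
  refine Finset.sum_congr rfl fun x _ => ?_
  have hset : ((univ.filter fun ω => ζ ω = z).filter fun ω => κ ω = x)
      = univ.filter fun ω => (κ ω, ζ ω) = (x, z) := by
    ext ω; simp [Prod.ext_iff, and_comm]
  rw [hset, Pr, Finset.mul_sum]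
  refine Finset.sum_congr (by ext ω; simp) fun ω hω => ?_
  simp only [mem_filter, Prod.ext_iff] at hω
  rw [hω.2.1]

lemma fiber_decomp {Ω Zα Zβ X : Type*} [Fintype Ω] [Fintype Zβ] [Fintype X]
    (p : Ω → ℝ) (hp : ∀ ω, 0 ≤ p ω) (ζα : Ω → Zα) (ζβ : Ω → Zβ) (κ : Ω → X) (f : X → ℝ)
    (a : Zα) (ha : 0 < Pr p ζα a)
    (hfocus : ∀ b, 0 < Pr p (fun ω => (ζα ω, ζβ ω)) (a, b) →
      ∀ x, CPr p κ x (fun ω => (ζα ω, ζβ ω)) (a, b) = CPr p κ x ζβ b) :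
    ∑ ω ∈ univ.filter fun ω => ζα ω = a, f (κ ω) * p ω
      = Pr p ζα a * ∑ b ∈ univ.filter fun b => 0 < Pr p (fun ω => (ζα ω, ζβ ω)) (a, b),
          CPr p ζβ b ζα a * CE p ζβ b (fun ω => f (κ ω)) := by
  rw [← Finset.sum_fiberwise (univ.filter fun ω => ζα ω = a) ζβ (fun ω => f (κ ω) * p ω)]
  rw [Finset.mul_sum]
  rw [← Finset.sum_subset (Finset.filter_subset (fun b => 0 < Pr p (fun ω => (ζα ω, ζβ ω)) (a, b)) univ)]
  · -- on the filter, both summands agree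
    refine Finset.sum_congr rfl fun b hb => ?_
    simp only [mem_filter, mem_univ, true_and] at hb
    have hPrab : Pr p (fun ω => (ζα ω, ζβ ω)) (a, b) ≠ 0 := ne_of_gt hb
    have hPrb : 0 < Pr p ζβ b := by
      refine lt_of_lt_of_le hb ?_
      refine Finset.sum_le_sum_of_subset_of_nonneg ?_ (fun ω _ _ => hp ω)
      intro ω hω
      simp only [mem_filter, mem_univ, true_and, Prod.ext_iff] at hω ⊢
      exact hω.2
    refine Eq.trans (Finset.sum_congr ?_ fun ω _ => rfl)
      (Eq.trans (sum_comp_eq p (fun ω => (ζα ω, ζβ ω)) (a, b) κ f) ?_)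
    · ext ω; simp [Prod.ext_iff]
    have hx : ∀ x, Pr p (fun ω => (κ ω, ζα ω, ζβ ω)) (x, a, b)
        = CPr p κ x ζβ b * Pr p (fun ω => (ζα ω, ζβ ω)) (a, b) := by
      intro x
      have := hfocus b hb x
      rw [CPr] at this
      rw [← this, div_mul_cancel₀ _ hPrab]
    calc ∑ x, f x * Pr p (fun ω => (κ ω, ζα ω, ζβ ω)) (x, a, b)
        = ∑ x, f x * (CPr p κ x ζβ b * Pr p (fun ω => (ζα ω, ζβ ω)) (a, b)) := by
          exact Finset.sum_congr rfl fun x _ => by rw [hx x]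
      _ = (Pr p (fun ω => (ζα ω, ζβ ω)) (a, b) / Pr p ζβ b)
            * ∑ x, f x * Pr p (fun ω => (κ ω, ζβ ω)) (x, b) := by
          rw [Finset.mul_sum]
          refine Finset.sum_congr rfl fun x _ => ?_
          rw [CPr]; field_simp
      _ = (Pr p (fun ω => (ζα ω, ζβ ω)) (a, b) / Pr p ζβ b)
            * ∑ ω ∈ univ.filter fun ω => ζβ ω = b, f (κ ω) * p ω := by
          rw [sum_comp_eq p ζβ b κ f]
      _ = Pr p ζα a * (CPr p ζβ b ζα a * CE p ζβ b fun ω => f (κ ω)) := by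
          rw [CPr, CE]
          have hba : Pr p (fun ω => (ζβ ω, ζα ω)) (b, a)
              = Pr p (fun ω => (ζα ω, ζβ ω)) (a, b) := by
            unfold Pr
            refine Finset.sum_congr ?_ fun _ _ => rfl
            ext ω; simp [Prod.ext_iff, and_comm]
          rw [hba]
          field_simp
  · -- off the filter, the inner sum vanishes
    intro b _ hb
    simp only [mem_filter, mem_univ, true_and, not_lt] at hb
    have hPrab : Pr p (fun ω => (ζα ω, ζβ ω)) (a, b) = 0 := by
      refine le_antisymm hb (Finset.sum_nonneg fun ω _ => hp ω)
    have hall := (Finset.sum_eq_zero_iff_of_nonneg fun ω _ => hp ω).mp hPrab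
    refine Finset.sum_eq_zero fun ω hω => ?_
    simp only [mem_filter, mem_univ, true_and] at hω
    have : p ω = 0 := hall ω (by simp [Prod.ext_iff, hω.1, hω.2])
    rw [this, mul_zero]

/-- Reformulation, forward equation: the conditional expectation of the gated
activation `f_j = d · Σ_k w_k (f_k ∘ κ_k)` given the parent summarization factorizes
through the children summarization variables. -/
theorem reformulation_forward
    {Ω Zα : Type*} [Fintype Ω] [Fintype Zα]
    {K : Type*} [Fintype K]
    {X : K → Type*} [∀ k, Fintype (X k)]
    {Zβ : K → Type*} [∀ k, Fintype (Zβ k)]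
    (p : Ω → ℝ) (hp : ∀ ω, 0 ≤ p ω) (hsum : ∑ ω, p ω = 1)
    (ζα : Ω → Zα) (κ : ∀ k, Ω → X k) (f : ∀ k, X k → ℝ) (w : K → ℝ)
    (ζβ : ∀ k, Ω → Zβ k) (d : Ω → ℝ)
    (fj : Ω → ℝ) (hfj : ∀ ω, fj ω = d ω * ∑ k, w k * f k (κ k ω))
    (hdecor : ∀ a, 0 < Pr p ζα a →
      CE p ζα a (fun ω => d ω * ∑ k, w k * f k (κ k ω)) =
        CE p ζα a d * CE p ζα a (fun ω => ∑ k, w k * f k (κ k ω)))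
    (hfocus : ∀ k a b, 0 < Pr p (fun ω => (ζα ω, ζβ k ω)) (a, b) →
      ∀ x, CPr p (κ k) x (fun ω => (ζα ω, ζβ k ω)) (a, b) = CPr p (κ k) x (ζβ k) b)
    (a : Zα) (ha : 0 < Pr p ζα a) :
    CE p ζα a fj =
      CE p ζα a d * ∑ k, w k *
        ∑ b ∈ univ.filter fun b => 0 < Pr p (fun ω => (ζα ω, ζβ k ω)) (a, b),
          CPr p (ζβ k) b ζα a * CE p (ζβ k) b (fun ω => f k (κ k ω)) := by
  have h1 : CE p ζα a fj = CE p ζα a (fun ω => d ω * ∑ k, w k * f k (κ k ω)) := by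
    unfold CE
    congr 1
    exact Finset.sum_congr rfl fun ω _ => by rw [hfj]
  rw [h1, hdecor a ha]
  congr 1
  unfold CE
  rw [div_eq_iff ha.ne']
  calc ∑ ω ∈ univ.filter fun ω => ζα ω = a, (∑ k, w k * f k (κ k ω)) * p ω
      = ∑ ω ∈ univ.filter fun ω => ζα ω = a, ∑ k, w k * (f k (κ k ω) * p ω) :=
        Finset.sum_congr rfl fun ω _ => by
          rw [Finset.sum_mul]; exact Finset.sum_congr rfl fun k _ => mul_assoc _ _ _
    _ = ∑ k, ∑ ω ∈ univ.filter fun ω => ζα ω = a, w k * (f k (κ k ω) * p ω) :=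
        Finset.sum_comm
    _ = ∑ k, w k * ∑ ω ∈ univ.filter fun ω => ζα ω = a, f k (κ k ω) * p ω :=
        Finset.sum_congr rfl fun k _ => (Finset.mul_sum _ _ _).symm
    _ = ∑ k, w k * (Pr p ζα a *
          ∑ b ∈ univ.filter fun b => 0 < Pr p (fun ω => (ζα ω, ζβ k ω)) (a, b),
            CPr p (ζβ k) b ζα a * CE p (ζβ k) b (fun ω => f k (κ k ω))) :=
        Finset.sum_congr rfl fun k _ => by
          rw [fiber_decomp p hp ζα (ζβ k) (κ k) (f k) a ha (hfocus k a)]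
    _ = (∑ k, w k *
          ∑ b ∈ univ.filter fun b => 0 < Pr p (fun ω => (ζα ω, ζβ k ω)) (a, b),
            CPr p (ζβ k) b ζα a * CE p (ζβ k) b (fun ω => f k (κ k ω))) * Pr p ζα a := by
        rw [Finset.sum_mul]; exact Finset.sum_congr rfl fun k _ => by ring
end

section
/- Reformulation, backward equation: Let Ω = V × R be a finite sample space with pmf p, ζ_β : V → Z_β a map on the first component, J a finite set of parents, and for each j ∈ J: a weight w_j ∈ ℝ, a function g_j : Ω → ℝ, a map ζ_{α_j} : Ω → Z_{α_j} into a finite type which factors through the first component V, and the marginalized function h_j : V → ℝ defined by h_j(v) := E[g_j | proj_V = v] (for v with P(proj_V = v) > 0). Let d : V → ℝ be a gating function and define g_k : Ω → ℝ by g_k(v, r) := d(v) · Σ_j w_j g_j(v, r). Assume: (i) broadness of knowledge: for each j and all a ∈ Z_{α_j}, b ∈ Z_β with P(ζ_{α_j} = a, ζ_β ∘ proj_V = b) > 0, E[h_j ∘ proj_V | ζ_{α_j} = a, ζ_β ∘ proj_V = b] = E[h_j ∘ proj_V | ζ_{α_j} = a]; (ii) decorrelation: for every b with P(ζ_β ∘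 proj_V = b) > 0, E[(d ∘ proj_V) · Σ_j w_j g_j | ζ_β ∘ proj_V = b] = E[d ∘ proj_V | ζ_β ∘ proj_V = b] · E[Σ_j w_j g_j | ζ_β ∘ proj_V = b]. Then for every b with P(ζ_β ∘ proj_V = b) > 0: E[g_k | ζ_β ∘ proj_V = b] = E[d ∘ proj_V | ζ_β ∘ proj_V = b] · Σ_j w_j Σ_{a : P(ζ_{α_j} = a, ζ_β ∘ proj_V = b) > 0} P(ζ_{α_j} = a | ζ_β ∘ proj_V = b) · E[h_j ∘ proj_V | ζ_{α_j} = a]. -/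
open Finset
open scoped Classical

private lemma sum_filter_fst {V R : Type*} [Fintype V] [Fintype R]
    (P : V → Prop) (f : V × R → ℝ) :
    ∑ ω ∈ univ.filter (fun ω : V × R => P ω.1), f ω
      = ∑ v ∈ univ.filter P, ∑ r, f (v, r) := by
  classical
  rw [Finset.sum_filter, Finset.sum_filter, Fintype.sum_prod_type]
  refine Finset.sum_congr rfl fun v _ => ?_
  split <;> simp

private lemma Pr_fst {V R : Type*} [Fintype V] [Fintype R] (p : V × R → ℝ) (v : V) :
    Pr p (fun ω => ω.1) v = ∑ r, p (v, r) := by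
  classical
  unfold Pr
  rw [sum_filter_fst (fun v' => v' = v) p, Finset.sum_filter]
  simp

/-- Reformulation, backward equation: the conditional expectation of the gated
back-propagated gradient `g_k = d · Σ_j w_j g_j` given the child summarization `ζ_β`
factorizes through the parent summarization variables `ζ_{α_j}`.  Here `Ω = V × R`,
where `V` is the content of the receptive field determining the gating `d`, the
summarizations `ζ_β`, `ζ_{α_j}` (which factor through the first component), and the
marginalized parent gradients `h_j (v) = E[g_j | proj_V = v]`. -/
theorem reformulation_backward
    {V R Zβ : Type*} [Fintype V] [Fintype R] [Fintype Zβ]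
    {J : Type*} [Fintype J]
    {Zα : J → Type*} [∀ j, Fintype (Zα j)]
    (p : V × R → ℝ) (hp : ∀ ω, 0 ≤ p ω) (hsum : ∑ ω, p ω = 1)
    (ζβ : V → Zβ) (w : J → ℝ) (g : J → V × R → ℝ)
    (ζα : ∀ j, V → Zα j) (d : V → ℝ)
    (h : J → V → ℝ)
    (hdef : ∀ j v, 0 < Pr p (fun ω => ω.1) v → h j v = CE p (fun ω => ω.1) v (g j))
    (gk : V × R → ℝ) (hgk : ∀ ω, gk ω = d ω.1 * ∑ j, w j * g j ω)
    (hbroad : ∀ j a b,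
      0 < Pr p (fun ω => (ζα j ω.1, ζβ ω.1)) (a, b) →
      CE p (fun ω => (ζα j ω.1, ζβ ω.1)) (a, b) (fun ω => h j ω.1) =
        CE p (fun ω => ζα j ω.1) a (fun ω => h j ω.1))
    (hdecor : ∀ b, 0 < Pr p (fun ω => ζβ ω.1) b →
      CE p (fun ω => ζβ ω.1) b (fun ω => d ω.1 * ∑ j, w j * g j ω) =
        CE p (fun ω => ζβ ω.1) b (fun ω => d ω.1) *
          CE p (fun ω => ζβ ω.1) b (fun ω => ∑ j, w j * g j ω))
    (b : Zβ) (hb : 0 < Pr p (fun ω => ζβ ω.1) b) :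
    CE p (fun ω => ζβ ω.1) b gk =
      CE p (fun ω => ζβ ω.1) b (fun ω => d ω.1) *
        ∑ j, w j *
          ∑ a ∈ univ.filter fun a => 0 < Pr p (fun ω => (ζα j ω.1, ζβ ω.1)) (a, b),
            CPr p (fun ω => ζα j ω.1) a (fun ω => ζβ ω.1) b *
              CE p (fun ω => ζα j ω.1) a (fun ω => h j ω.1) := by
  classical
  set Pb := Pr p (fun ω => ζβ ω.1) b with hPb
  have hPbne : Pb ≠ 0 := ne_of_gt hb
  -- Step A: per j, replace g j by h j on the event ζβ = b
  have stepA : ∀ j, ∑ ω ∈ univ.filter (fun ω : V × R => ζβ ω.1 = b), g j ω * p ω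
      = ∑ ω ∈ univ.filter (fun ω : V × R => ζβ ω.1 = b), h j ω.1 * p ω := by
    intro j
    rw [sum_filter_fst (fun v => ζβ v = b) (fun ω => g j ω * p ω),
        sum_filter_fst (fun v => ζβ v = b) (fun ω => h j ω.1 * p ω)]
    refine Finset.sum_congr rfl fun v _ => ?_
    have hPv : Pr p (fun ω => ω.1) v = ∑ r, p (v, r) := Pr_fst p v
    rcases lt_or_eq_of_le (Finset.sum_nonneg fun r _ => hp (v, r)) with hpos | hzero
    · have hposPr : 0 < Pr p (fun ω => ω.1) v := by rw [hPv]; exact hpos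
      have hh : ∑ r : R, h j (v, r).1 * p (v, r) = h j v * ∑ r : R, p (v, r) := by
        rw [Finset.mul_sum]
      rw [hh, hdef j v hposPr]
      unfold CE
      rw [sum_filter_fst (fun v' => v' = v) (fun ω => g j ω * p ω)]
      have hfe : (univ.filter fun v' : V => v' = v) = {v} := by ext; simp
      rw [hfe, Finset.sum_singleton, hPv, div_mul_cancel₀]
      exact ne_of_gt hpos
    · have hz : ∀ r, p (v, r) = 0 := fun r =>
        (Finset.sum_eq_zero_iff_of_nonneg (fun r _ => hp (v, r))).mp hzero.symm r
          (Finset.mem_univ r)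
      simp [hz]
  -- Step B: decompose the event ζβ = b over the values of ζα j
  have stepB : ∀ j, ∑ ω ∈ univ.filter (fun ω : V × R => ζβ ω.1 = b), h j ω.1 * p ω
      = ∑ a ∈ univ.filter (fun a => 0 < Pr p (fun ω => (ζα j ω.1, ζβ ω.1)) (a, b)),
          ∑ ω ∈ univ.filter (fun ω : V × R => (ζα j ω.1, ζβ ω.1) = (a, b)), h j ω.1 * p ω := by
    intro j
    have hsplit : ∑ ω ∈ univ.filter (fun ω : V × R => ζβ ω.1 = b), h j ω.1 * p ω
        = ∑ a : Zα j, ∑ ω ∈ univ.filter (fun ω : V × R => (ζα j ω.1, ζβ ω.1) = (a, b)),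
            h j ω.1 * p ω := by
      have : ∀ ω ∈ univ.filter (fun ω : V × R => ζβ ω.1 = b),
          h j ω.1 * p ω = ∑ a : Zα j, if ζα j ω.1 = a then h j ω.1 * p ω else 0 := by
        intro ω _
        rw [Finset.sum_ite_eq univ (ζα j ω.1) (fun _ => h j ω.1 * p ω)]
        simp
      rw [Finset.sum_congr rfl this, Finset.sum_comm]
      refine Finset.sum_congr rfl fun a _ => ?_
      rw [← Finset.sum_filter, Finset.filter_filter]
      apply Finset.sum_congr _ fun _ _ => rfl
      apply Finset.filter_congr
      intro ω _
      simp only [Prod.mk.injEq]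
      tauto
    rw [hsplit]
    symm
    refine Finset.sum_subset (Finset.subset_univ _) fun a _ ha => ?_
    have h0 : Pr p (fun ω => (ζα j ω.1, ζβ ω.1)) (a, b) = 0 := by
      have hnn : 0 ≤ Pr p (fun ω => (ζα j ω.1, ζβ ω.1)) (a, b) :=
        Finset.sum_nonneg fun ω _ => hp ω
      have := Finset.mem_filter.not.mp ha
      push_neg at this
      exact le_antisymm (this (Finset.mem_univ a)) hnn
    refine Finset.sum_eq_zero fun ω hω => ?_
    have hmem : (ζα j ω.1, ζβ ω.1) = (a, b) := (Finset.mem_filter.mp hω).2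
    have hpω : p ω = 0 := by
      refine (Finset.sum_eq_zero_iff_of_nonneg (fun ω _ => hp ω)).mp h0 ω ?_
      simp only [Finset.mem_filter, Finset.mem_univ, true_and]
      exact hmem
    rw [hpω, mul_zero]
  -- per-j identity for the conditional expectations
  have keyj : ∀ j, CE p (fun ω => ζβ ω.1) b (g j)
      = ∑ a ∈ univ.filter (fun a => 0 < Pr p (fun ω => (ζα j ω.1, ζβ ω.1)) (a, b)),
          CPr p (fun ω => ζα j ω.1) a (fun ω => ζβ ω.1) b *
            CE p (fun ω => ζα j ω.1) a (fun ω => h j ω.1) := by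
    intro j
    have hR : ∀ a ∈ univ.filter (fun a => 0 < Pr p (fun ω => (ζα j ω.1, ζβ ω.1)) (a, b)),
        CPr p (fun ω => ζα j ω.1) a (fun ω => ζβ ω.1) b *
            CE p (fun ω => ζα j ω.1) a (fun ω => h j ω.1)
          = (∑ ω ∈ univ.filter (fun ω : V × R => (ζα j ω.1, ζβ ω.1) = (a, b)),
              h j ω.1 * p ω) / Pb := by
      intro a haa
      have hpos : 0 < Pr p (fun ω => (ζα j ω.1, ζβ ω.1)) (a, b) :=
        (Finset.mem_filter.mp haa).2
      rw [← hbroad j a b hpos]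
      unfold CPr CE
      rw [← hPb]
      field_simp
    rw [Finset.sum_congr rfl hR, ← Finset.sum_div, ← stepB j, ← stepA j]
    unfold CE
    rw [← hPb]
  -- assemble
  have hgk' : CE p (fun ω => ζβ ω.1) b gk
      = CE p (fun ω => ζβ ω.1) b (fun ω => d ω.1 * ∑ j, w j * g j ω) := by
    unfold CE
    congr 1
    exact Finset.sum_congr rfl fun ω _ => by rw [hgk]
  rw [hgk', hdecor b hb]
  congr 1
  have : CE p (fun ω => ζβ ω.1) b (fun ω => ∑ j, w j * g j ω)
      = ∑ j, w j * CE p (fun ω => ζβ ω.1) b (g j) := by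
    unfold CE
    have hnum : ∑ ω ∈ univ.filter (fun ω : V × R => ζβ ω.1 = b), (∑ j, w j * g j ω) * p ω
        = ∑ j, w j * ∑ ω ∈ univ.filter (fun ω : V × R => ζβ ω.1 = b), g j ω * p ω := by
      simp_rw [Finset.sum_mul, mul_assoc]
      rw [Finset.sum_comm]
      simp_rw [← Finset.mul_sum]
    rw [hnum, Finset.sum_div]
    exact Finset.sum_congr rfl fun j _ => (mul_div_assoc _ _ _)
  rw [this]
  exact Finset.sum_congr rfl fun j _ => by rw [keyj j]
end

section
/- Matrix form of the weight update: Let Ω be a finite sample space with pmf p, ζ_α : Ω → Z_α and ζ_β : Ω → Z_β maps into finite types, κ : Ω → K a map into a finite type, f : K → ℝ, and g : Ω → ℝ. Assume: (i) decorrelation: for every a with P(ζ_α = a) > 0, E[(f ∘ κ) · g | ζ_α = a] = E[f ∘ κ | ζ_α = a] · E[g | ζ_α = a]; (ii) focus of knowledge: for all a, b with P(ζ_α = a, ζ_β = b) > 0 and all x ∈ K, P(κ = x | ζ_α = a, ζ_β = b) = P(κ = x | ζ_β = b). Then the full expectation factorizes through the summarization variables: Σ_ω f(κ(ω)) g(ω)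 p(ω) = Σ_{a : P(ζ_α = a) > 0} Σ_{b : P(ζ_α = a, ζ_β = b) > 0} P(ζ_α = a) · P(ζ_β = b | ζ_α = a) · E[f ∘ κ | ζ_β = b] · E[g | ζ_α = a]. -/
open Finset
open scoped Classical

lemma Pr_nonneg' {Ω : Type*} [Fintype Ω] {Z : Type*} {p : Ω → ℝ} (hp : ∀ ω, 0 ≤ p ω)
    (ζ : Ω → Z) (z : Z) : 0 ≤ Pr p ζ z :=
  Finset.sum_nonneg fun ω _ => hp ω

lemma p_eq_zero_of_Pr_eq_zero {Ω : Type*} [Fintype Ω] {Z : Type*} {p : Ω → ℝ}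
    (hp : ∀ ω, 0 ≤ p ω) {ζ : Ω → Z} {z : Z} (h : Pr p ζ z = 0) {ω : Ω} (hω : ζ ω = z) :
    p ω = 0 := by
  have := (Finset.sum_eq_zero_iff_of_nonneg (fun ω _ => hp ω)).mp h
  exact this ω (by simp [hω])

lemma sum_fk {Ω K : Type*} [Fintype Ω] [Fintype K] (S : Finset Ω) (κ : Ω → K) (f : K → ℝ)
    (p : Ω → ℝ) :
    ∑ ω ∈ S, f (κ ω) * p ω = ∑ x, f x * ∑ ω ∈ S.filter (fun ω => κ ω = x), p ω := by
  rw [← Finset.sum_fiberwise_of_maps_to (fun ω _ => mem_univ (κ ω))]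
  refine sum_congr rfl fun x _ => ?_
  rw [mul_sum]
  exact sum_congr rfl fun ω hω => by rw [(mem_filter.mp hω).2]

/-- Matrix form of the weight update: under decorrelation and focus of knowledge,
the full expectation `Δw = E_x[f(κ(x)) g(x)]` factorizes through the summarization
variables, `Δw = E_{z_α, z_β}[f(z_β) g(z_α)]`. -/
theorem weight_update_matrix_form
    {Ω Zα Zβ K : Type*} [Fintype Ω] [Fintype Zα] [Fintype Zβ] [Fintype K]
    (p : Ω → ℝ) (hp : ∀ ω, 0 ≤ p ω) (hsum : ∑ ω, p ω = 1)
    (ζα : Ω → Zα) (ζβ : Ω → Zβ) (κ : Ω → K) (f : K → ℝ) (g : Ω → ℝ)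
    (hdecor : ∀ a, 0 < Pr p ζα a →
      CE p ζα a (fun ω => f (κ ω) * g ω) =
        CE p ζα a (fun ω => f (κ ω)) * CE p ζα a g)
    (hfocus : ∀ a b, 0 < Pr p (fun ω => (ζα ω, ζβ ω)) (a, b) →
      ∀ x, CPr p κ x (fun ω => (ζα ω, ζβ ω)) (a, b) = CPr p κ x ζβ b) :
    ∑ ω, f (κ ω) * g ω * p ω =
      ∑ a ∈ univ.filter fun a => 0 < Pr p ζα a,
        ∑ b ∈ univ.filter fun b => 0 < Pr p (fun ω => (ζα ω, ζβ ω)) (a, b),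
          Pr p ζα a * CPr p ζβ b ζα a *
            CE p ζβ b (fun ω => f (κ ω)) * CE p ζα a g := by
  set pair : Ω → Zα × Zβ := fun ω => (ζα ω, ζβ ω) with hpair
  have hfilt : ∀ a b, (univ.filter fun ω => ζα ω = a).filter (fun ω => ζβ ω = b) =
      univ.filter fun ω => pair ω = (a, b) := by
    intro a b; ext ω; simp [hpair, Prod.ext_iff, and_assoc]
  have hjointβ : ∀ (x : K) (b : Zβ),
      (univ.filter fun ω => ζβ ω = b).filter (fun ω => κ ω = x) =
      univ.filter fun ω => (κ ω, ζβ ω) = (x, b) := by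
    intro x b; ext ω; simp [Prod.ext_iff, and_comm]
  have hjointp : ∀ (x : K) (a : Zα) (b : Zβ),
      (univ.filter fun ω => pair ω = (a, b)).filter (fun ω => κ ω = x) =
      univ.filter fun ω => (κ ω, pair ω) = (x, (a, b)) := by
    intro x a b; ext ω; simp [Prod.ext_iff, and_comm]
  have hswap : ∀ (a : Zα) (b : Zβ),
      Pr p (fun ω => (ζβ ω, ζα ω)) (b, a) = Pr p pair (a, b) := by
    intro a b; unfold Pr
    refine Finset.sum_congr ?_ fun _ _ => rfl
    ext ω; simp [hpair, Prod.ext_iff, and_comm]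
  have hkey : ∀ a b, 0 < Pr p pair (a, b) →
      ∑ ω ∈ univ.filter (fun ω => pair ω = (a, b)), f (κ ω) * p ω =
        Pr p pair (a, b) * CE p ζβ b (fun ω => f (κ ω)) := by
    intro a b hab
    have hβpos : 0 < Pr p ζβ b := by
      by_contra h
      have h0 : Pr p ζβ b = 0 := le_antisymm (not_lt.mp h) (Pr_nonneg' hp ζβ b)
      refine hab.ne' (Finset.sum_eq_zero fun ω hω => ?_)
      simp only [Finset.mem_filter, hpair, Prod.ext_iff] at hω
      exact p_eq_zero_of_Pr_eq_zero hp h0 hω.2.2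
    have hβne := hβpos.ne'
    rw [sum_fk]
    have step : ∀ x ∈ (univ : Finset K),
        f x * ∑ ω ∈ (univ.filter fun ω => pair ω = (a, b)).filter (fun ω => κ ω = x), p ω =
        Pr p pair (a, b) / Pr p ζβ b * (f x * Pr p (fun ω => (κ ω, ζβ ω)) (x, b)) := by
      intro x _
      have hjoint : ∑ ω ∈ (univ.filter fun ω => pair ω = (a, b)).filter (fun ω => κ ω = x),
          p ω = Pr p (fun ω => (κ ω, pair ω)) (x, (a, b)) := by
        unfold Pr
        refine Finset.sum_congr ?_ fun _ _ => rfl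
        ext ω; simp [Prod.ext_iff, and_comm]
      have h1 : Pr p (fun ω => (κ ω, pair ω)) (x, (a, b)) =
          CPr p κ x pair (a, b) * Pr p pair (a, b) := by
        rw [CPr, div_mul_cancel₀ _ hab.ne']
      rw [hjoint, h1, hfocus a b hab x, CPr]
      ring
    rw [Finset.sum_congr rfl step, ← mul_sum]
    have hback : ∑ ω ∈ univ.filter (fun ω => ζβ ω = b), f (κ ω) * p ω =
        ∑ x, f x * Pr p (fun ω => (κ ω, ζβ ω)) (x, b) := by
      rw [sum_fk]
      refine Finset.sum_congr rfl fun x _ => ?_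
      congr 1
      unfold Pr
      refine Finset.sum_congr ?_ fun _ _ => rfl
      ext ω; simp [Prod.ext_iff, and_comm]
    rw [← hback, CE]
    field_simp
  -- decompose LHS over a
  rw [← Finset.sum_fiberwise_of_maps_to (fun ω (_ : ω ∈ univ) => mem_univ (ζα ω))
      (f := fun ω => f (κ ω) * g ω * p ω) (g := ζα)]
  rw [← Finset.sum_filter_add_sum_filter_not univ (fun a => 0 < Pr p ζα a)]
  have hzero : ∑ a ∈ univ.filter (fun a => ¬ 0 < Pr p ζα a),
      ∑ ω ∈ univ.filter (fun ω => ζα ω = a), f (κ ω) * g ω * p ω = 0 := by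
    refine Finset.sum_eq_zero fun a ha => Finset.sum_eq_zero fun ω hω => ?_
    have hPr0 : Pr p ζα a = 0 :=
      le_antisymm (not_lt.mp (mem_filter.mp ha).2) (Pr_nonneg' hp ζα a)
    rw [p_eq_zero_of_Pr_eq_zero hp hPr0 (mem_filter.mp hω).2, mul_zero]
  rw [hzero, add_zero]
  refine Finset.sum_congr rfl fun a ha => ?_
  have hapos : 0 < Pr p ζα a := (mem_filter.mp ha).2
  have hane := hapos.ne'
  have hlhs : ∑ ω ∈ univ.filter (fun ω => ζα ω = a), f (κ ω) * g ω * p ω =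
      CE p ζα a (fun ω => f (κ ω)) * CE p ζα a g * Pr p ζα a := by
    rw [← hdecor a hapos, CE, div_mul_cancel₀ _ hane]
  have hCEa : CE p ζα a (fun ω => f (κ ω)) * Pr p ζα a =
      ∑ b ∈ univ.filter (fun b => 0 < Pr p pair (a, b)),
        Pr p pair (a, b) * CE p ζβ b (fun ω => f (κ ω)) := by
    rw [CE, div_mul_cancel₀ _ hane]
    rw [← Finset.sum_fiberwise_of_maps_to
        (fun ω (_ : ω ∈ univ.filter fun ω => ζα ω = a) => mem_univ (ζβ ω))
        (f := fun ω => f (κ ω) * p ω) (g := ζβ)]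
    rw [← Finset.sum_filter_add_sum_filter_not univ (fun b => 0 < Pr p pair (a, b))]
    have hz : ∑ b ∈ univ.filter (fun b => ¬ 0 < Pr p pair (a, b)),
        ∑ ω ∈ (univ.filter fun ω => ζα ω = a).filter (fun ω => ζβ ω = b),
          f (κ ω) * p ω = 0 := by
      refine Finset.sum_eq_zero fun b hb => Finset.sum_eq_zero fun ω hω => ?_
      have hPr0 : Pr p pair (a, b) = 0 :=
        le_antisymm (not_lt.mp (mem_filter.mp hb).2) (Pr_nonneg' hp pair (a, b))
      have hmem := mem_filter.mp hω
      have hpw : pair ω = (a, b) := by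
        simp [hpair, (mem_filter.mp hmem.1).2, hmem.2]
      rw [p_eq_zero_of_Pr_eq_zero hp hPr0 hpw, mul_zero]
    rw [hz, add_zero]
    refine Finset.sum_congr rfl fun b hb => ?_
    rw [hfilt a b]
    exact hkey a b (mem_filter.mp hb).2
  have hterm : ∀ b, 0 < Pr p pair (a, b) →
      Pr p ζα a * CPr p ζβ b ζα a = Pr p pair (a, b) := by
    intro b _
    rw [CPr, hswap a b, mul_div_cancel₀ _ hane]
  rw [hlhs]
  calc CE p ζα a (fun ω => f (κ ω)) * CE p ζα a g * Pr p ζα a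
      = (∑ b ∈ univ.filter (fun b => 0 < Pr p pair (a, b)),
          Pr p pair (a, b) * CE p ζβ b (fun ω => f (κ ω))) * CE p ζα a g := by
        rw [← hCEa]; ring
    _ = _ := by
        rw [Finset.sum_mul]
        refine Finset.sum_congr rfl fun b hb => ?_
        rw [← hterm b (mem_filter.mp hb).2]
end

section
/- Backpropagation of Batch Norm is a scaled orthogonal projection: Fix N ≥ 1 and constants c₁, c₀ ∈ ℝ. In the Euclidean space ℝ^N with standard inner product, let 𝟙 be the all-ones vector, and for f ∈ ℝ^N define μ(f) = (1/N) Σ_i f_i, σ(f) = ‖f − μ(f)𝟙‖₂ / √N, and BN(f) = c₁ (f − μ(f)𝟙)/σ(f) + c₀𝟙. Then for every f that is not a scalar multiple of 𝟙 (equivalently σ(f) > 0), BN is Fréchet differentiable at f, and its derivative equals (c₁/σ(f)) · Q, where Q is the orthogonal projection of ℝ^N onto the orthogonal complement of the subspace spanned by f and 𝟙. -/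
open Finset

/-- The all-ones vector in `ℝ^N`. -/
noncomputable def ones (N : ℕ) : EuclideanSpace ℝ (Fin N) := WithLp.toLp 2 (fun _ => 1)

/-- Batch mean `μ(f) = (1/N) Σ_i f_i`. -/
noncomputable def bnMean (N : ℕ) (f : EuclideanSpace ℝ (Fin N)) : ℝ :=
  (∑ i, f i) / N

/-- Batch standard deviation `σ(f) = ‖f − μ(f)𝟙‖₂ / √N`. -/
noncomputable def bnSigma (N : ℕ) (f : EuclideanSpace ℝ (Fin N)) : ℝ :=
  ‖f - bnMean N f • ones N‖ / Real.sqrt N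

/-- The Batch Normalization map `BN(f) = c₁ (f − μ(f)𝟙)/σ(f) + c₀𝟙`. -/
noncomputable def BN (N : ℕ) (c₁ c₀ : ℝ) (f : EuclideanSpace ℝ (Fin N)) :
    EuclideanSpace ℝ (Fin N) :=
  c₁ • (bnSigma N f)⁻¹ • (f - bnMean N f • ones N) + c₀ • ones N

/-! Write `P` for the orthogonal projection onto `𝟙ᗮ`, so that `f - μ(f)𝟙 = P f` and
`BN(x) = c₁√N · ‖P x‖⁻¹ • P x + c₀𝟙`. The derivative of `y ↦ ‖y‖⁻¹ • y` at `g ≠ 0` is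
`‖g‖⁻¹` times the projection onto `gᗮ`, so by the chain rule `BN'(f)` is `c₁√N/‖P f‖` times
the projection onto `(P f)ᗮ` composed with `P`. As `P f ⟂ 𝟙`, this composite is the
projection onto `(span{P f, 𝟙})ᗮ = (span{f, 𝟙})ᗮ`, and `√N/‖P f‖ = 1/σ(f)`. -/

open scoped RealInnerProductSpace

theorem Submodule.span_singleton_sup_eq_of_sub_mem {R M : Type*} [Ring R] [AddCommGroup M]
    [Module R M] {K : Submodule R M} {x y : M} (h : x - y ∈ K) : R ∙ x ⊔ K = R ∙ y ⊔ K := by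
  have key : ∀ {a b : M}, a - b ∈ K → R ∙ a ⊔ K ≤ R ∙ b ⊔ K := fun {a b} hab =>
    sup_le ((Submodule.span_singleton_le_iff_mem _ _).2 <| Submodule.mem_sup.2
      ⟨b, Submodule.mem_span_singleton_self b, a - b, hab, add_sub_cancel b a⟩) le_sup_right
  exact le_antisymm (key h) (key (by rw [← neg_sub]; exact K.neg_mem h))

theorem Submodule.IsOrtho.starProjection_orthogonal_comp_starProjection_orthogonal
    {𝕜 E : Type*} [RCLike 𝕜] [NormedAddCommGroup E] [InnerProductSpace 𝕜 E]
    {U V : Submodule 𝕜 E} [U.HasOrthogonalProjection] [V.HasOrthogonalProjection]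
    [(U ⊔ V).HasOrthogonalProjection] (h : U ⟂ V) :
    Uᗮ.starProjection ∘L Vᗮ.starProjection = (U ⊔ V)ᗮ.starProjection := by
  ext v
  set x := Vᗮ.starProjection v
  have hx : x = v - V.starProjection v := Submodule.starProjection_orthogonal_val v
  have hmem : Uᗮ.starProjection x ∈ (U ⊔ V)ᗮ := by
    rw [← Submodule.inf_orthogonal]
    refine ⟨Uᗮ.starProjection_apply_mem x, ?_⟩
    rw [Submodule.starProjection_orthogonal_val]
    exact Vᗮ.sub_mem (Vᗮ.starProjection_apply_mem v) (h.le (U.starProjection_apply_mem x))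
  have hrest : U.starProjection x + V.starProjection v ∈ (U ⊔ V)ᗮᗮ :=
    (U ⊔ V).le_orthogonal_orthogonal <| add_mem
      (Submodule.mem_sup_left (U.starProjection_apply_mem x))
      (Submodule.mem_sup_right (V.starProjection_apply_mem v))
  exact (Submodule.eq_starProjection_of_mem_orthogonal' hmem hrest
    (by rw [Submodule.starProjection_orthogonal_val, hx]; abel)).symm

section InnerProductSpace

variable {E : Type*} [NormedAddCommGroup E] [InnerProductSpace ℝ E]

theorem hasFDerivAt_norm_of_ne_zero {x : E} (hx : x ≠ 0) :
    HasFDerivAt (‖·‖) (‖x‖⁻¹ • innerSL ℝ x) x := by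
  have hsqrt := (hasStrictFDerivAt_norm_sq x).hasFDerivAt.sqrt (by positivity)
  simp only [Real.sqrt_sq (norm_nonneg _)] at hsqrt
  refine hsqrt.congr_fderiv ?_
  ext v
  simp only [smul_apply, coe_innerSL_apply, nsmul_eq_mul, Nat.cast_ofNat, smul_eq_mul]
  field_simp

theorem hasFDerivAt_inv_norm_smul {x : E} (hx : x ≠ 0) :
    HasFDerivAt (fun y => ‖y‖⁻¹ • y) (‖x‖⁻¹ • (ℝ ∙ x)ᗮ.starProjection) x := by
  have hnx : ‖x‖ ≠ 0 := norm_ne_zero_iff.2 hx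
  have hinv := (hasDerivAt_inv hnx).comp_hasFDerivAt x (hasFDerivAt_norm_of_ne_zero hx)
  refine (hinv.smul (hasFDerivAt_id x)).congr_fderiv ?_
  ext v
  simp only [add_apply, smul_apply, ContinuousLinearMap.smulRight_apply, Function.comp_apply,
    coe_innerSL_apply, id_eq, ContinuousLinearMap.id_apply, smul_eq_mul, Real.ringHom_apply,
    Submodule.starProjection_orthogonal_val, Submodule.starProjection_singleton]
  match_scalars <;> field_simp

theorem hasFDerivAt_inv_norm_smul_starProjection_orthogonal (K : Submodule ℝ E)
    [K.HasOrthogonalProjection] {f : E} [(ℝ ∙ f ⊔ K).HasOrthogonalProjection]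
    (hf : Kᗮ.starProjection f ≠ 0) :
    HasFDerivAt (fun x => ‖Kᗮ.starProjection x‖⁻¹ • Kᗮ.starProjection x)
      (‖Kᗮ.starProjection f‖⁻¹ • (ℝ ∙ f ⊔ K)ᗮ.starProjection) f := by
  set P := Kᗮ.starProjection
  have hspan : ℝ ∙ P f ⊔ K = ℝ ∙ f ⊔ K :=
    Submodule.span_singleton_sup_eq_of_sub_mem (by simp [P])
  have hortho : ℝ ∙ P f ⟂ K := Submodule.isOrtho_iff_le.2 <|
    (Submodule.span_singleton_le_iff_mem _ _).2 (Kᗮ.starProjection_apply_mem f)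
  have : (ℝ ∙ P f ⊔ K).HasOrthogonalProjection := hspan ▸ inferInstance
  have hcomp : HasFDerivAt (fun x => ‖P x‖⁻¹ • P x) _ f :=
    (hasFDerivAt_inv_norm_smul hf).comp f P.hasFDerivAt
  rw [ContinuousLinearMap.smul_comp,
    hortho.starProjection_orthogonal_comp_starProjection_orthogonal] at hcomp
  convert hcomp using 3
  rw [hspan]

end InnerProductSpace

theorem inner_ones (N : ℕ) (v : EuclideanSpace ℝ (Fin N)) : ⟪ones N, v⟫ = ∑ i, v i := by
  simp [ones, PiLp.inner_apply]

theorem norm_ones_sq (N : ℕ) : ‖ones N‖ ^ 2 = N := by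
  rw [← real_inner_self_eq_norm_sq, inner_ones]
  simp [ones]

theorem sub_bnMean_smul_ones_eq_starProjection (N : ℕ) (v : EuclideanSpace ℝ (Fin N)) :
    v - bnMean N v • ones N = (ℝ ∙ ones N)ᗮ.starProjection v := by
  rw [Submodule.starProjection_orthogonal_val, Submodule.starProjection_singleton, inner_ones,
    norm_ones_sq, bnMean]
  rfl

theorem bnSigma_eq_norm_starProjection_div (N : ℕ) (v : EuclideanSpace ℝ (Fin N)) :
    bnSigma N v = ‖(ℝ ∙ ones N)ᗮ.starProjection v‖ / √N := by
  rw [bnSigma, sub_bnMean_smul_ones_eq_starProjection]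

theorem BN_eq_inv_norm_smul_starProjection (N : ℕ) (c₁ c₀ : ℝ) :
    BN N c₁ c₀ = fun x => (c₁ * √N) • (‖(ℝ ∙ ones N)ᗮ.starProjection x‖⁻¹ •
      (ℝ ∙ ones N)ᗮ.starProjection x) + c₀ • ones N := by
  funext x
  rw [BN, bnSigma_eq_norm_starProjection_div, sub_bnMean_smul_ones_eq_starProjection, inv_div,
    smul_smul, smul_smul]
  congr 2
  ring

theorem bn_fderiv_is_scaled_projection_general (N : ℕ) (c₁ c₀ : ℝ)
    (f : EuclideanSpace ℝ (Fin N)) (hσ : 0 < bnSigma N f) :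
    HasFDerivAt (BN N c₁ c₀)
      ((c₁ / bnSigma N f) •
        (((Submodule.span ℝ {f, ones N})ᗮ).subtypeL.comp
          (Submodule.orthogonalProjectionOnto (Submodule.span ℝ {f, ones N})ᗮ))) f := by
  set P := (ℝ ∙ ones N)ᗮ.starProjection
  have hPf : P f ≠ 0 := fun h => by simp [bnSigma_eq_norm_starProjection_div, P, h] at hσ
  have hBN := ((hasFDerivAt_inv_norm_smul_starProjection_orthogonal (ℝ ∙ ones N) hPf).const_smul
    (c₁ * √N)).add_const (c₀ • ones N)
  rw [BN_eq_inv_norm_smul_starProjection, Submodule.span_insert]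
  refine hBN.congr_fderiv ?_
  rw [smul_smul, bnSigma_eq_norm_starProjection_div, div_div_eq_mul_div, div_eq_mul_inv]
  rfl

/-- Backpropagation of Batch Norm is a scaled orthogonal projection: at any `f`
with `σ(f) > 0`, `BN` is Fréchet differentiable and its derivative is
`(c₁/σ(f)) · Q`, where `Q` is the orthogonal projection onto the orthogonal
complement of `span{f, 𝟙}`. -/
theorem bn_fderiv_is_scaled_projection (N : ℕ) (hN : 1 ≤ N) (c₁ c₀ : ℝ)
    (f : EuclideanSpace ℝ (Fin N)) (hσ : 0 < bnSigma N f) :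
    HasFDerivAt (BN N c₁ c₀)
      ((c₁ / bnSigma N f) •
        (((Submodule.span ℝ {f, ones N})ᗮ).subtypeL.comp
          (Submodule.orthogonalProjectionOnto (Submodule.span ℝ {f, ones N})ᗮ))) f :=
  bn_fderiv_is_scaled_projection_general N c₁ c₀ f hσ
end

section
/- One-layer ReLU expressibility from all-vert transition matrices: Let m ≥ 1, let B be a nonempty finite index set, and for each β ∈ B let m_β ≥ 1 and P_β be a real m × m_β matrix that is all-vert, meaning every one of its m rows is a vertex of the convex hull of its rows (in particular the rows are pairwise distinct). Then there exist matrices W_β of size m_β × m (for each β ∈ B) and a bias vector b ∈ ℝ^m such that the matrix M defined by M_{i j} = max(0, (Σ_{β ∈ B} P_β W_β)_{i j} + b_j) equals the m × m identity matrix. -/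
open Finset Matrix

/-- Row `i` of the matrix `P` is a vertex of the convex hull of the rows of `P`,
i.e. it does not lie in the convex hull of the other rows. -/
def IsVertexRow {m n : ℕ} (P : Matrix (Fin m) (Fin n) ℝ) (i : Fin m) : Prop :=
  P i ∉ convexHull ℝ {v | ∃ j, j ≠ i ∧ P j = v}

/-- A matrix is all-vert if every row is a vertex of the convex hull of its rows. -/
def AllVert {m n : ℕ} (P : Matrix (Fin m) (Fin n) ℝ) : Prop :=
  ∀ i, IsVertexRow P i

/-! A vertex row is strictly separated from the other rows by a hyperplane (Hahn–Banach, the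
convex hull of finitely many points being closed). Rescaling the separating affine functional
to take the value `1` at that row makes it `≤ 0` at every other row, so its ReLU is the indicator
of the row. Using these functionals of the rows of one `P β` as the columns of `W β`, and zero
weights for all other `β`, gives the identity. -/

theorem Set.Finite.exists_separating_of_notMem_convexHull {E : Type*} [TopologicalSpace E]
    [AddCommGroup E] [Module ℝ E] [IsTopologicalAddGroup E] [ContinuousSMul ℝ E]
    [LocallyConvexSpace ℝ E] [T2Space E] {s : Set E} (hs : s.Finite) {x : E}
    (hx : x ∉ convexHull ℝ s) : ∃ (f : E →L[ℝ] ℝ) (u : ℝ), f x < u ∧ ∀ y ∈ s, u < f y := by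
  obtain ⟨f, u, hxu, hu⟩ := geometric_hahn_banach_point_closed (convex_convexHull ℝ s)
    (hs.isClosed_convexHull (𝕜 := ℝ)) hx
  exact ⟨f, u, hxu, fun y hy => hu y (subset_convexHull ℝ s hy)⟩

theorem dotProductEquiv_symm_dotProduct {R n : Type*} [CommSemiring R] [Fintype n]
    [DecidableEq n] (f : Module.Dual R (n → R)) (x : n → R) :
    (dotProductEquiv R n).symm f ⬝ᵥ x = f x := by
  conv_rhs => rw [← (dotProductEquiv R n).apply_symm_apply f]
  rfl

theorem IsVertexRow.exists_relu_mulVec_eq_single {m n : ℕ} {P : Matrix (Fin m) (Fin n) ℝ}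
    {i : Fin m} (hi : IsVertexRow P i) :
    ∃ (w : Fin n → ℝ) (c : ℝ), ∀ j, max 0 ((P *ᵥ w) j + c) = (Pi.single i 1 : Fin m → ℝ) j := by
  have hfin : {v | ∃ j, j ≠ i ∧ P j = v}.Finite :=
    (Set.finite_range P).subset fun _ ⟨j, _, hv⟩ => ⟨j, hv⟩
  obtain ⟨f, u, hiu, hu⟩ := hfin.exists_separating_of_notMem_convexHull hi
  set a := (dotProductEquiv ℝ (Fin n)).symm f.toLinearMap
  set d := u - f (P i)
  have hd : 0 < d := sub_pos.2 hiu
  refine ⟨-d⁻¹ • a, u / d, fun j => ?_⟩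
  have hj : (P *ᵥ (-d⁻¹ • a)) j + u / d = (u - f (P j)) / d := by
    rw [mulVec_smul, Pi.smul_apply, mulVec, dotProduct_comm, dotProductEquiv_symm_dotProduct]
    simp only [ContinuousLinearMap.coe_coe, smul_eq_mul]
    ring
  rw [hj]
  rcases eq_or_ne j i with rfl | hji
  · rw [Pi.single_eq_same, div_self hd.ne', max_eq_right zero_le_one]
  · rw [Pi.single_eq_of_ne hji, max_eq_left]
    exact div_nonpos_of_nonpos_of_nonneg (by linarith [hu _ ⟨j, hji, rfl⟩]) hd.le

theorem AllVert.exists_relu_mul_eq_one {m n : ℕ} {P : Matrix (Fin m) (Fin n) ℝ}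
    (hP : AllVert P) :
    ∃ (W : Matrix (Fin n) (Fin m) ℝ) (b : Fin m → ℝ),
      (of fun i j => max 0 ((P * W) i j + b j)) = 1 := by
  choose w c hwc using fun j => IsVertexRow.exists_relu_mulVec_eq_single (hP j)
  refine ⟨of fun k j => w j k, c, ?_⟩
  ext i j
  rw [of_apply, one_apply, eq_comm, ← Pi.single_apply]
  exact (hwc j i).symm

theorem Matrix.sum_mul_pi_single {ι l o R : Type*} [Fintype ι] [DecidableEq ι] [Fintype l]
    [NonUnitalNonAssocSemiring R] {n : ι → Type*} [∀ β, Fintype (n β)]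
    (P : ∀ β, Matrix l (n β) R) (β₀ : ι) (W : Matrix (n β₀) o R) :
    ∑ β, P β * Pi.single (M := fun β => Matrix (n β) o R) β₀ W β = P β₀ * W := by
  rw [Finset.sum_eq_single β₀ (fun β _ hβ => by simp [hβ]) (by simp), Pi.single_eq_same]

theorem relu_one_layer_identity_general {m : ℕ}
    {B : Type*} [Fintype B] [Nonempty B]
    (mβ : B → ℕ)
    (P : ∀ β, Matrix (Fin m) (Fin (mβ β)) ℝ)
    (hP : ∀ β, AllVert (P β)) :
    ∃ (W : ∀ β, Matrix (Fin (mβ β)) (Fin m) ℝ) (b : Fin m → ℝ),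
      (Matrix.of fun i j => max 0 ((∑ β, P β * W β) i j + b j)) =
        (1 : Matrix (Fin m) (Fin m) ℝ) := by
  classical
  obtain ⟨β₀⟩ := ‹Nonempty B›
  obtain ⟨W, b, hWb⟩ := (hP β₀).exists_relu_mul_eq_one
  exact ⟨Pi.single β₀ W, b, by rwa [sum_mul_pi_single]⟩

/-- One-layer ReLU expressibility from all-vert transition matrices: if every
`P_β` is all-vert, there exist weights `W_β` and biases `b` such that
`ReLU(Σ_β P_β W_β + 𝟙 bᵀ)` is the identity matrix. -/
theorem relu_one_layer_identity {m : ℕ} (hm : 1 ≤ m)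
    {B : Type*} [Fintype B] [Nonempty B]
    (mβ : B → ℕ) (hmβ : ∀ β, 1 ≤ mβ β)
    (P : ∀ β, Matrix (Fin m) (Fin (mβ β)) ℝ)
    (hP : ∀ β, AllVert (P β)) :
    ∃ (W : ∀ β, Matrix (Fin (mβ β)) (Fin m) ℝ) (b : Fin m → ℝ),
      (Matrix.of fun i j => max 0 ((∑ β, P β * W β) i j + b j)) =
        (1 : Matrix (Fin m) (Fin m) ℝ) :=
  relu_one_layer_identity_general mβ P hP
end

section
/- Separable Weight Update (two-factor case): Let P₁ be a real m₁ × n₁ matrix and P₂ a real m₂ × n₂ matrix whose rows each sum to 1 (row-stochastic in the algebraic sense: P₁ 𝟙 = 𝟙 and P₂ 𝟙 = 𝟙). Let F₁ be n₁ × k₁ and F₂ be n₂ × k₂ real matrices, and define the (n₁·n₂) × (k₁ + k₂) disentangled matrix F by F((x,y), inl i) = F₁(x, i) and F((x,y), inr j) = F₂(y, j). Let p₁ ∈ ℝ^{m₁}, p₂ ∈ ℝ^{m₂} with Σ_x p₁(x) = 1 and Σ_y p₂(y) = 1, and let g₁ ∈ ℝ^{m₁}, g₂ ∈ ℝ^{m₂}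 with Σ_x g₁(x) = 0 and Σ_y g₂(y) = 0 (centered gradients). Define the (m₁·m₂) × 2 disentangled gradient matrix G by G((x,y), 0) = g₁(x) p₂(y) and G((x,y), 1) = p₁(x) g₂(y). Then the weight update ΔW := ((P₁ ⊗ P₂) · F)ᵀ · G is separable (block diagonal) with respect to the decomposition Fin k₁ ⊕ Fin k₂: ΔW(inl i, 1) = 0 and ΔW(inr j, 0) = 0 for all i, j, while ΔW(inl i, 0) = ((P₁ F₁)ᵀ g₁)(i) and ΔW(inr j, 1) = ((P₂ F₂)ᵀ g₂)(j). -/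
open Finset Matrix
open scoped Kronecker

/-- Separable Weight Update (two-factor case): if the transition matrix factorizes
as `P₁ ⊗ P₂` with row sums one, the child activation `F` is disentangled, and the
gradient `G` is disentangled with centered factors `g₁, g₂` and marginal
probability vectors `p₁, p₂`, then the weight update
`ΔW = ((P₁ ⊗ P₂) F)ᵀ G` is separable (block diagonal): its off-diagonal blocks
vanish and its diagonal blocks are `(P₁ F₁)ᵀ g₁` and `(P₂ F₂)ᵀ g₂`. -/
theorem separable_weight_update_two_factor
    {m₁ n₁ m₂ n₂ k₁ k₂ : ℕ}
    (P₁ : Matrix (Fin m₁) (Fin n₁) ℝ) (P₂ : Matrix (Fin m₂) (Fin n₂) ℝ)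
    (hP₁ : ∀ x, ∑ u, P₁ x u = 1) (hP₂ : ∀ y, ∑ v, P₂ y v = 1)
    (F₁ : Matrix (Fin n₁) (Fin k₁) ℝ) (F₂ : Matrix (Fin n₂) (Fin k₂) ℝ)
    (F : Matrix (Fin n₁ × Fin n₂) (Fin k₁ ⊕ Fin k₂) ℝ)
    (hFl : ∀ x y i, F (x, y) (Sum.inl i) = F₁ x i)
    (hFr : ∀ x y j, F (x, y) (Sum.inr j) = F₂ y j)
    (p₁ : Fin m₁ → ℝ) (p₂ : Fin m₂ → ℝ)
    (hp₁ : ∑ x, p₁ x = 1) (hp₂ : ∑ y, p₂ y = 1)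
    (g₁ : Fin m₁ → ℝ) (g₂ : Fin m₂ → ℝ)
    (hg₁ : ∑ x, g₁ x = 0) (hg₂ : ∑ y, g₂ y = 0)
    (G : Matrix (Fin m₁ × Fin m₂) (Fin 2) ℝ)
    (hG0 : ∀ x y, G (x, y) 0 = g₁ x * p₂ y)
    (hG1 : ∀ x y, G (x, y) 1 = p₁ x * g₂ y) :
    (∀ i, (((P₁ ⊗ₖ P₂) * F)ᵀ * G) (Sum.inl i) 1 = 0) ∧
    (∀ j, (((P₁ ⊗ₖ P₂) * F)ᵀ * G) (Sum.inr j) 0 = 0) ∧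
    (∀ i, (((P₁ ⊗ₖ P₂) * F)ᵀ * G) (Sum.inl i) 0 = ((P₁ * F₁)ᵀ *ᵥ g₁) i) ∧
    (∀ j, (((P₁ ⊗ₖ P₂) * F)ᵀ * G) (Sum.inr j) 1 = ((P₂ * F₂)ᵀ *ᵥ g₂) j) := by
  have hPFl : ∀ x y i, ((P₁ ⊗ₖ P₂) * F) (x, y) (Sum.inl i) = (P₁ * F₁) x i := by
    intro x y i
    simp only [mul_apply, Fintype.sum_prod_type, kroneckerMap_apply, hFl]
    calc ∑ u, ∑ v, P₁ x u * P₂ y v * F₁ u i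
        = ∑ u, P₁ x u * F₁ u i * ∑ v, P₂ y v := by
          simp [Finset.mul_sum]; congr 1; ext u; congr 1; ext v; ring
      _ = ∑ u, P₁ x u * F₁ u i := by simp [hP₂]
  have hPFr : ∀ x y j, ((P₁ ⊗ₖ P₂) * F) (x, y) (Sum.inr j) = (P₂ * F₂) y j := by
    intro x y j
    simp only [mul_apply, Fintype.sum_prod_type, kroneckerMap_apply, hFr]
    calc ∑ u, ∑ v, P₁ x u * P₂ y v * F₂ v j
        = ∑ u, P₁ x u * ∑ v, P₂ y v * F₂ v j := by
          simp [Finset.mul_sum]; congr 1; ext u; congr 1; ext v; ring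
      _ = ∑ v, P₂ y v * F₂ v j := by
          rw [← Finset.sum_mul, hP₁, one_mul]
  refine ⟨?_, ?_, ?_, ?_⟩
  · intro i
    calc (((P₁ ⊗ₖ P₂) * F)ᵀ * G) (Sum.inl i) 1
        = ∑ x, ∑ y, ((P₁ ⊗ₖ P₂) * F) (x, y) (Sum.inl i) * G (x, y) 1 := by
          rw [mul_apply, Fintype.sum_prod_type]; rfl
      _ = ∑ x, (P₁ * F₁) x i * p₁ x * ∑ y, g₂ y := by
          simp [hPFl, hG1, Finset.mul_sum]; congr 1; ext x; congr 1; ext y; ring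
      _ = 0 := by simp [hg₂]
  · intro j
    calc (((P₁ ⊗ₖ P₂) * F)ᵀ * G) (Sum.inr j) 0
        = ∑ x, ∑ y, ((P₁ ⊗ₖ P₂) * F) (x, y) (Sum.inr j) * G (x, y) 0 := by
          rw [mul_apply, Fintype.sum_prod_type]; rfl
      _ = ∑ x, g₁ x * ∑ y, (P₂ * F₂) y j * p₂ y := by
          simp [hPFr, hG0, Finset.mul_sum]; congr 1; ext x; congr 1; ext y; ring
      _ = 0 := by rw [← Finset.sum_mul, hg₁, zero_mul]
  · intro i
    simp only [mulVec, dotProduct, transpose_apply]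
    calc (((P₁ ⊗ₖ P₂) * F)ᵀ * G) (Sum.inl i) 0
        = ∑ x, ∑ y, ((P₁ ⊗ₖ P₂) * F) (x, y) (Sum.inl i) * G (x, y) 0 := by
          rw [mul_apply, Fintype.sum_prod_type]; rfl
      _ = ∑ x, (P₁ * F₁) x i * g₁ x * ∑ y, p₂ y := by
          simp [hPFl, hG0, Finset.mul_sum]; congr 1; ext x; congr 1; ext y; ring
      _ = ∑ x, (P₁ * F₁) x i * g₁ x := by simp [hp₂]
  · intro j
    simp only [mulVec, dotProduct, transpose_apply]
    calc (((P₁ ⊗ₖ P₂) * F)ᵀ * G) (Sum.inr j) 1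
        = ∑ x, ∑ y, ((P₁ ⊗ₖ P₂) * F) (x, y) (Sum.inr j) * G (x, y) 1 := by
          rw [mul_apply, Fintype.sum_prod_type]; rfl
      _ = ∑ x, p₁ x * ∑ y, (P₂ * F₂) y j * g₂ y := by
          simp [hPFr, hG1, Finset.mul_sum]; congr 1; ext x; congr 1; ext y; ring
      _ = ∑ y, (P₂ * F₂) y j * g₂ y := by rw [← Finset.sum_mul, hp₁, one_mul]
end
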